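/- arXiv:1902.05927 — 4 statements merged into one kernel-verified Lean document; each statement's English description precedes it below -/
import Mathlib

section
/- For each player i, the payoff at the Nash equilibrium x1* = x2* = α/(4c₂ - αc₁) equals u_i(x1*, x2*) = (α²/2)·(6c₂ - αc₁)/(4c₂ - αc₁)². -/
theorem nash_payoff (α c₁ c₂ : ℝ) (hα : 0 < α)
    (hc₁ : c₁ ∈ Set.Icc 0 (2 / α)) (hc₂ : c₂ ∈ Set.Icc (3/2 : ℝ) 2)
    (u : Fin 2 → ℝ → ℝ → ℝ)
    (hu : ∀ i x1 x2, u i x1 x2 =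
      α * ((x1 + x2) / 2 + c₁ * (x1 * x2) / 2) - c₂ * (if i = 0 then x1 else x2)^2) :
    ∀ i, u i (α / (4 * c₂ - α * c₁)) (α / (4 * c₂ - α * c₁)) =
      α^2 / 2 * ((6 * c₂ - α * c₁) / (4 * c₂ - α * c₁)^2) := by
  have h1 : α * c₁ ≤ 2 := by
    have := hc₁.2
    calc α * c₁ ≤ α * (2 / α) := by nlinarith
    _ = 2 := by field_simp
  have hne : 4 * c₂ - α * c₁ ≠ 0 := by nlinarith [hc₂.1]
  intro i
  rw [hu]
  split <;> field_simp <;> ring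
end

section
/- The optimal one-shot deviation against x̂ strictly improves player 2's payoff while requiring strictly less effort: u_2(x̂, α/(2(2c₂ - αc₁))) > u_2(x̂, x̂) and α/(2(2c₂ - αc₁)) < x̂ = α/(2c₂ - αc₁). -/
theorem deviation_improves (α c₁ c₂ : ℝ) (hα : 0 < α)
    (hc₁ : c₁ ∈ Set.Icc 0 (2 / α)) (hc₂ : c₂ ∈ Set.Icc (3/2 : ℝ) 2)
    (u₂ : ℝ → ℝ → ℝ)
    (hu : ∀ x1 x2, u₂ x1 x2 = α * ((x1 + x2) / 2 + c₁ * (x1 * x2) / 2) - c₂ * x2^2) :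
    u₂ (α / (2 * c₂ - α * c₁)) (α / (2 * (2 * c₂ - α * c₁))) >
      u₂ (α / (2 * c₂ - α * c₁)) (α / (2 * c₂ - α * c₁)) ∧
    α / (2 * (2 * c₂ - α * c₁)) < α / (2 * c₂ - α * c₁) := by
  obtain ⟨h1, h2⟩ := hc₁
  obtain ⟨h3, h4⟩ := hc₂
  have hac : α * c₁ ≤ 2 := by
    have := (le_div_iff₀ hα).mp h2
    linarith
  have hd : 0 < 2 * c₂ - α * c₁ := by nlinarith
  set x := α / (2 * c₂ - α * c₁) with hxdef
  have hx : 0 < x := div_pos hα hd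
  have hxd : (2 * c₂ - α * c₁) * x = α := by
    rw [hxdef]; field_simp
  have h2x : α / (2 * (2 * c₂ - α * c₁)) = x / 2 := by
    rw [hxdef, div_div, mul_comm]
  constructor
  · rw [h2x, hu, hu, gt_iff_lt, ← sub_pos]
    have : 0 < c₂ * x := by nlinarith
    nlinarith [mul_pos this hx]
  · rw [h2x]
    linarith
end

section
/- Assuming 2c₂ - αc₁ ≥ 1, the deviation payoff u_2(x̂, α/(2(2c₂-αc₁))) = α²(5c₂ - 2αc₁)/(4(2c₂-αc₁)²) is greater than or equal to both boundary values u_2(x̂, 0) = α²/(2(2c₂-αc₁)) and u_2(x̂, α) = α²/(2(2c₂-αc₁)) + c₂α²(1 - (2c₂-αc₁))/(2c₂-αc₁). -/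
theorem deviation_ge_boundaries (α c₁ c₂ : ℝ) (hα : 0 < α)
    (hc₁ : c₁ ∈ Set.Icc 0 (2 / α)) (hc₂ : c₂ ∈ Set.Icc (3/2 : ℝ) 2)
    (hl : 2 * c₂ - α * c₁ ≥ 1)
    (u₂ : ℝ → ℝ → ℝ)
    (hu : ∀ x1 x2, u₂ x1 x2 = α * ((x1 + x2) / 2 + c₁ * (x1 * x2) / 2) - c₂ * x2^2) :
    u₂ (α / (2 * c₂ - α * c₁)) (α / (2 * (2 * c₂ - α * c₁))) =
      α^2 * (5 * c₂ - 2 * α * c₁) / (4 * (2 * c₂ - α * c₁)^2) ∧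
    u₂ (α / (2 * c₂ - α * c₁)) 0 = α^2 / (2 * (2 * c₂ - α * c₁)) ∧
    u₂ (α / (2 * c₂ - α * c₁)) α =
      α^2 / (2 * (2 * c₂ - α * c₁)) +
        c₂ * α^2 * (1 - (2 * c₂ - α * c₁)) / (2 * c₂ - α * c₁) ∧
    u₂ (α / (2 * c₂ - α * c₁)) (α / (2 * (2 * c₂ - α * c₁))) ≥
      u₂ (α / (2 * c₂ - α * c₁)) 0 ∧
    u₂ (α / (2 * c₂ - α * c₁)) (α / (2 * (2 * c₂ - α * c₁))) ≥
      u₂ (α / (2 * c₂ - α * c₁)) α := by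
  have hD : (0:ℝ) < 2 * c₂ - α * c₁ := by linarith
  have hD' : 2 * c₂ - α * c₁ ≠ 0 := ne_of_gt hD
  have hc₂0 : (0:ℝ) < c₂ := by have := hc₂.1; linarith
  simp only [hu]
  refine ⟨by field_simp; ring, by field_simp; ring, by field_simp; ring, ?_, ?_⟩
  · rw [ge_iff_le, ← sub_nonneg]
    have key : α * ((α / (2 * c₂ - α * c₁) + α / (2 * (2 * c₂ - α * c₁))) / 2 +
        c₁ * (α / (2 * c₂ - α * c₁) * (α / (2 * (2 * c₂ - α * c₁)))) / 2) -
        c₂ * (α / (2 * (2 * c₂ - α * c₁)))^2 -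
        (α * ((α / (2 * c₂ - α * c₁) + 0) / 2 + c₁ * (α / (2 * c₂ - α * c₁) * 0) / 2) -
        c₂ * 0^2) = α^2 * c₂ / (4 * (2 * c₂ - α * c₁)^2) := by
      field_simp; ring
    rw [key]
    positivity
  · rw [ge_iff_le, ← sub_nonneg]
    have key : α * ((α / (2 * c₂ - α * c₁) + α / (2 * (2 * c₂ - α * c₁))) / 2 +
        c₁ * (α / (2 * c₂ - α * c₁) * (α / (2 * (2 * c₂ - α * c₁)))) / 2) -
        c₂ * (α / (2 * (2 * c₂ - α * c₁)))^2 -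
        (α * ((α / (2 * c₂ - α * c₁) + α) / 2 + c₁ * (α / (2 * c₂ - α * c₁) * α) / 2) -
        c₂ * α^2) = c₂ * α^2 * (2 * (2 * c₂ - α * c₁) - 1)^2 / (4 * (2 * c₂ - α * c₁)^2) := by
      field_simp; ring
    rw [key]
    positivity
end

section
/- For δ ∈ (0,1), the cooperation present value α²/(2(2c₂-αc₁)) · 1/(1-δ) is at least the deviation present value α²(5c₂-2αc₁)/(4(2c₂-αc₁)²) + δ·α²(6c₂-αc₁)/(2(4c₂-αc₁)²(1-δ)) if and only if δ ≥ (4c₂-αc₁)² / ((4c₂-αc₁)² + 8c₂(2c₂-αc₁)). -/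
/-!
Both sides are present values of the form `π_C/(1-δ)` versus `π_D + δ π_N/(1-δ)`, with per-period
payoffs from cooperation, from the optimal one-shot deviation and from the static Nash equilibrium.
Such a trigger condition holds exactly when `δ ≥ (π_D - π_C)/(π_D - π_N)` as soon as `π_N < π_D`;
for the partnership game both differences are `α² c₂` times an explicit rational function, and the
common factor cancels in the quotient.
-/

theorem critical_discount_iff {πC πD πN δ : ℝ} (hδ : δ < 1) (hNash : πN < πD) :
    πD + δ * (πN / (1 - δ)) ≤ πC * (1 / (1 - δ)) ↔ (πD - πC) / (πD - πN) ≤ δ := by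
  have h1δ : 0 < 1 - δ := sub_pos.2 hδ
  rw [div_le_iff₀ (sub_pos.2 hNash), ← mul_le_mul_iff_left₀ h1δ]
  field_simp
  constructor <;> intro h <;> linarith

namespace Partnership

variable (α c₁ c₂ : ℝ)

noncomputable def cooperationPayoff : ℝ := α ^ 2 / (2 * (2 * c₂ - α * c₁))

noncomputable def deviationPayoff : ℝ :=
  α ^ 2 * (5 * c₂ - 2 * α * c₁) / (4 * (2 * c₂ - α * c₁) ^ 2)

noncomputable def nashPayoff : ℝ := α ^ 2 * (6 * c₂ - α * c₁) / (2 * (4 * c₂ - α * c₁) ^ 2)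

theorem deviationPayoff_sub_cooperationPayoff :
    deviationPayoff α c₁ c₂ - cooperationPayoff α c₁ c₂ =
      α ^ 2 * c₂ / (4 * (2 * c₂ - α * c₁) ^ 2) := by
  unfold deviationPayoff cooperationPayoff
  field_simp
  ring

theorem deviationPayoff_sub_nashPayoff (hA : 2 * c₂ - α * c₁ ≠ 0) (hB : 4 * c₂ - α * c₁ ≠ 0) :
    deviationPayoff α c₁ c₂ - nashPayoff α c₁ c₂ =
      α ^ 2 * c₂ * ((4 * c₂ - α * c₁) ^ 2 + 8 * c₂ * (2 * c₂ - α * c₁)) /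
        (4 * (2 * c₂ - α * c₁) ^ 2 * (4 * c₂ - α * c₁) ^ 2) := by
  unfold deviationPayoff nashPayoff
  rw [div_sub_div _ _ (by positivity) (by positivity),
    div_eq_div_iff (by positivity) (by positivity)]
  ring

section Regime

variable {α c₁ c₂}

theorem nashPayoff_lt_deviationPayoff (hc₂ : 0 < c₂) (hA : 0 < 2 * c₂ - α * c₁) (hα : α ≠ 0) :
    nashPayoff α c₁ c₂ < deviationPayoff α c₁ c₂ := by
  have hB : 0 < 4 * c₂ - α * c₁ := by linarith
  rw [← sub_pos, deviationPayoff_sub_nashPayoff α c₁ c₂ hA.ne' hB.ne']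
  positivity

theorem criticalDiscount_eq (hc₂ : 0 < c₂) (hA : 0 < 2 * c₂ - α * c₁) (hα : α ≠ 0) :
    (deviationPayoff α c₁ c₂ - cooperationPayoff α c₁ c₂) /
        (deviationPayoff α c₁ c₂ - nashPayoff α c₁ c₂) =
      (4 * c₂ - α * c₁) ^ 2 / ((4 * c₂ - α * c₁) ^ 2 + 8 * c₂ * (2 * c₂ - α * c₁)) := by
  have hB : 0 < 4 * c₂ - α * c₁ := by linarith
  have hS : 0 < (4 * c₂ - α * c₁) ^ 2 + 8 * c₂ * (2 * c₂ - α * c₁) := by positivity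
  rw [deviationPayoff_sub_cooperationPayoff,
    deviationPayoff_sub_nashPayoff α c₁ c₂ hA.ne' hB.ne', div_div_div_eq,
    div_eq_div_iff (by positivity) hS.ne']
  ring

end Regime

end Partnership

theorem trigger_incentive (α c₁ c₂ δ : ℝ) (hα : 0 < α)
    (hc₁ : c₁ ∈ Set.Icc 0 (2 / α)) (hc₂ : c₂ ∈ Set.Icc (3/2 : ℝ) 2)
    (hδ : δ ∈ Set.Ioo (0 : ℝ) 1) :
    α^2 / (2 * (2 * c₂ - α * c₁)) * (1 / (1 - δ)) ≥
      α^2 * (5 * c₂ - 2 * α * c₁) / (4 * (2 * c₂ - α * c₁)^2) +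
        δ * (α^2 * (6 * c₂ - α * c₁) / (2 * (4 * c₂ - α * c₁)^2 * (1 - δ))) ↔
    δ ≥ (4 * c₂ - α * c₁)^2 /
      ((4 * c₂ - α * c₁)^2 + 8 * c₂ * (2 * c₂ - α * c₁)) := by
  have hαc₁ : α * c₁ ≤ 2 := by
    have := (le_div_iff₀' hα).1 hc₁.2
    linarith
  have hc₂pos : 0 < c₂ := by linarith [hc₂.1]
  have hA : 0 < 2 * c₂ - α * c₁ := by linarith [hc₂.1]
  have h := critical_discount_iff (πC := Partnership.cooperationPayoff α c₁ c₂) hδ.2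
    (Partnership.nashPayoff_lt_deviationPayoff hc₂pos hA hα.ne')
  rw [Partnership.criticalDiscount_eq hc₂pos hA hα.ne'] at h
  simpa only [Partnership.cooperationPayoff, Partnership.deviationPayoff, Partnership.nashPayoff,
    div_div] using h
end
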